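/- Let X be a Banach space, f : ℝⁿ → X strongly measurable, and 0 < λ ≤ κ < 1/2. Then for any quasi-optimal center of oscillation c_κ(f;Q) of f on a cube Q, one has (‖f − c_κ(f;Q)‖_X χ_Q)*(λ|Q|) ≤ 4·ω_λ(f;Q). -/

import Mathlib

open MeasureTheory ENNReal Filter

/-- An axis-parallel cube in `ℝⁿ`, given by its lower-left corner and (positive) side length. -/
structure DyCube (n : ℕ) where
  corner : Fin n → ℝ
  side : ℝ
  side_pos : 0 < side

namespace DyCube

/-- The set of points of a cube (half-open, so that dyadic children tile it exactly). -/
def set {n : ℕ} (Q : DyCube n) : Set (Fin n → ℝ) :=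
  Set.univ.pi fun i => Set.Ico (Q.corner i) (Q.corner i + Q.side)

/-- `P.IsDyadicSub Q` : `P` is a dyadic subcube of `Q`, obtained by `k` successive
dyadic subdivisions of `Q`. -/
def IsDyadicSub {n : ℕ} (P Q : DyCube n) : Prop :=
  ∃ k : ℕ, ∃ m : Fin n → ℕ, (∀ i, m i < 2 ^ k) ∧ P.side = Q.side / 2 ^ k ∧
    ∀ i, P.corner i = Q.corner i + m i * (Q.side / 2 ^ k)

end DyCube

/-- `Ω_k`, the union of the cubes of the `k`-th generation of a family. -/
def genUnion {n : ℕ} (F : ℕ → Set (DyCube n)) (k : ℕ) : Set (Fin n → ℝ) :=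
  ⋃ P ∈ F k, P.set

/-- A contracting family of dyadic subcubes of `Q`: generations `F k` of pairwise disjoint
dyadic subcubes, starting from `F 0 = {Q}`, with decreasing unions whose measures tend to `0`. -/
structure ContractingFamily {n : ℕ} (Q : DyCube n) (F : ℕ → Set (DyCube n)) : Prop where
  zero : F 0 = {Q}
  dyadic : ∀ k, ∀ P ∈ F k, P.IsDyadicSub Q
  disj : ∀ k, (F k).PairwiseDisjoint DyCube.set
  nested : ∀ k, genUnion F (k + 1) ⊆ genUnion F k
  vanish : Tendsto (fun k => volume (genUnion F k)) atTop (nhds 0)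

/-- An `η`-sparse family: a contracting family such that each cube `P ∈ F k` satisfies
`|E_P| ≥ η |P|`, where `E_P = P \ Ω_{k+1}`. -/
def IsSparseFamily {n : ℕ} (η : ℝ) (Q : DyCube n) (F : ℕ → Set (DyCube n)) : Prop :=
  ContractingFamily Q F ∧
    ∀ k, ∀ P ∈ F k, ENNReal.ofReal η * volume P.set ≤ volume (P.set \ genUnion F (k + 1))

/-- The nonincreasing rearrangement of an `ℝ≥0∞`-valued function with respect to a measure. -/
noncomputable def rearrE {α : Type*} [MeasurableSpace α] (μ : Measure α) (g : α → ℝ≥0∞)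
    (t : ℝ≥0∞) : ℝ≥0∞ :=
  sInf {a : ℝ≥0∞ | μ {x | a < g x} ≤ t}

/-- The local mean oscillation `ω_λ(f;Q) = inf_{c ∈ X} (‖f − c‖_X χ_Q)^*(λ|Q|)`. -/
noncomputable def locMeanOsc {n : ℕ} {X : Type*} [NormedAddCommGroup X]
    (f : (Fin n → ℝ) → X) (Q : DyCube n) (lam : ℝ) : ℝ≥0∞ :=
  ⨅ c : X, rearrE volume (fun x => Q.set.indicator (fun y => ENNReal.ofReal ‖f y - c‖) x)
    (ENNReal.ofReal lam * volume Q.set)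

/-!
Two centers `c, c'` are close: the sets where `‖f − c‖ > a` and `‖f − c'‖ > b` each fill less
than half of `Q`, so some point of `Q` lies outside both, and there `‖c − c'‖ ≤ a + b`. Hence
`‖c − c'‖ ≤ (‖f − c‖χ_Q)^*(κ|Q|) + (‖f − c'‖χ_Q)^*(κ|Q|)`. For a quasi-optimal `c` the first term
is at most `2 ω_κ(f;Q) ≤ 2 ω_λ(f;Q)` and the second at most `(‖f − c'‖χ_Q)^*(λ|Q|)`, so
`(‖f − c‖χ_Q)^*(λ|Q|) ≤ (‖f − c'‖χ_Q)^*(λ|Q|) + ‖c − c'‖ ≤ 2 (‖f − c'‖χ_Q)^*(λ|Q|) + 2 ω_λ(f;Q)`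
for every `c'`; the infimum over `c'` gives `4 ω_λ(f;Q)`.
-/

section Rearrangement

variable {α : Type*} [MeasurableSpace α] {μ : Measure α}

theorem rearrE_antitone (g : α → ℝ≥0∞) : Antitone (rearrE μ g) :=
  fun _ _ hst => sInf_le_sInf fun _ ha => le_trans ha hst

theorem rearrE_le_add_of_le_add {g h : α → ℝ≥0∞} {d : ℝ≥0∞} (hgh : ∀ x, g x ≤ h x + d)
    (t : ℝ≥0∞) : rearrE μ g t ≤ rearrE μ h t + d := by
  rw [← tsub_le_iff_right]
  refine le_sInf fun a ha => tsub_le_iff_right.2 (sInf_le ?_)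
  refine le_trans (measure_mono fun x hx => ?_) ha
  exact lt_of_add_lt_add_right (hx.trans_le (hgh x) : a + d < h x + d)

theorem exists_mem_le_and_le_of_measure_add_lt {S : Set α} {g h : α → ℝ≥0∞} {a b : ℝ≥0∞}
    (hμ : μ {x | a < g x} + μ {x | b < h x} < μ S) : ∃ x ∈ S, g x ≤ a ∧ h x ≤ b := by
  by_contra! hS
  refine (measure_union_le _ _).not_gt (hμ.trans_le (measure_mono fun x hx => ?_))
  by_cases hga : g x ≤ a
  · exact Or.inr (hS x hx hga)
  · exact Or.inl (not_le.1 hga)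

theorem le_rearrE_add_rearrE {S : Set α} {g h : α → ℝ≥0∞} {d t s : ℝ≥0∞} (hts : t + s < μ S)
    (hd : ∀ x ∈ S, d ≤ g x + h x) : d ≤ rearrE μ g t + rearrE μ h s := by
  simp only [rearrE, sInf_eq_iInf]
  refine ENNReal.le_iInf₂_add_iInf₂ fun a ha b hb => ?_
  obtain ⟨x, hxS, hxa, hxb⟩ :=
    exists_mem_le_and_le_of_measure_add_lt ((add_le_add ha hb).trans_lt hts)
  exact (hd x hxS).trans (add_le_add hxa hxb)

end Rearrangement

namespace DyCube

variable {n : ℕ}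

theorem volume_set (Q : DyCube n) : volume Q.set = ENNReal.ofReal Q.side ^ n := by
  simp [DyCube.set, volume_pi_pi, Real.volume_Ico]

theorem volume_set_ne_zero (Q : DyCube n) : volume Q.set ≠ 0 := by
  rw [volume_set]
  exact pow_ne_zero _ (ENNReal.ofReal_pos.2 Q.side_pos).ne'

theorem volume_set_ne_top (Q : DyCube n) : volume Q.set ≠ ∞ := by
  rw [volume_set]
  exact pow_ne_top ofReal_ne_top

theorem ofReal_mul_volume_add_lt {κ : ℝ} (hκ : κ < 1 / 2) (Q : DyCube n) :
    ENNReal.ofReal κ * volume Q.set + ENNReal.ofReal κ * volume Q.set < volume Q.set := by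
  have hκ₂ : ENNReal.ofReal κ + ENNReal.ofReal κ < 1 := by
    rw [← two_mul, ← ENNReal.ofReal_ofNat 2, ← ENNReal.ofReal_mul zero_le_two]
    exact ENNReal.ofReal_lt_one.2 (by linarith)
  rw [← add_mul]
  simpa using ENNReal.mul_lt_mul_left Q.volume_set_ne_zero Q.volume_set_ne_top hκ₂

end DyCube

section Oscillation

variable {n : ℕ} {X : Type*} [NormedAddCommGroup X]

/-- `‖f − c‖_X χ_Q`. -/
noncomputable def deviation (f : (Fin n → ℝ) → X) (Q : DyCube n) (c : X) :
    (Fin n → ℝ) → ℝ≥0∞ :=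
  Q.set.indicator fun y => ENNReal.ofReal ‖f y - c‖

theorem deviation_le_deviation_add (f : (Fin n → ℝ) → X) (Q : DyCube n) (c c' : X)
    (x : Fin n → ℝ) : deviation f Q c x ≤ deviation f Q c' x + ENNReal.ofReal ‖c - c'‖ := by
  by_cases hx : x ∈ Q.set
  · simp only [deviation, Set.indicator_of_mem hx]
    rw [← ENNReal.ofReal_add (norm_nonneg _) (norm_nonneg _)]
    refine ENNReal.ofReal_le_ofReal ?_
    simpa [norm_sub_rev c c'] using norm_sub_le_norm_sub_add_norm_sub (f x) c' c
  · simp [deviation, Set.indicator_of_notMem hx]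

theorem ofReal_norm_sub_le_deviation_add {f : (Fin n → ℝ) → X} {Q : DyCube n} {x : Fin n → ℝ}
    (hx : x ∈ Q.set) (c c' : X) :
    ENNReal.ofReal ‖c - c'‖ ≤ deviation f Q c x + deviation f Q c' x := by
  simp only [deviation, Set.indicator_of_mem hx]
  rw [← ENNReal.ofReal_add (norm_nonneg _) (norm_nonneg _)]
  refine ENNReal.ofReal_le_ofReal ?_
  simpa [norm_sub_rev (f x) c] using norm_sub_le_norm_sub_add_norm_sub c (f x) c'

theorem ofReal_norm_sub_le_rearrE_add {κ : ℝ} (hκ : κ < 1 / 2) (f : (Fin n → ℝ) → X)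
    (Q : DyCube n) (c c' : X) :
    ENNReal.ofReal ‖c - c'‖ ≤ rearrE volume (deviation f Q c) (ENNReal.ofReal κ * volume Q.set)
      + rearrE volume (deviation f Q c') (ENNReal.ofReal κ * volume Q.set) :=
  le_rearrE_add_rearrE (Q.ofReal_mul_volume_add_lt hκ)
    fun _ hx => ofReal_norm_sub_le_deviation_add hx c c'

theorem locMeanOsc_le_of_le (f : (Fin n → ℝ) → X) (Q : DyCube n) {lam κ : ℝ} (h : lam ≤ κ) :
    locMeanOsc f Q κ ≤ locMeanOsc f Q lam :=
  iInf_mono fun _ => rearrE_antitone _ (by gcongr)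

theorem rearrE_deviation_le {lam κ : ℝ} (hlamκ : lam ≤ κ) (hκ : κ < 1 / 2)
    (f : (Fin n → ℝ) → X) (Q : DyCube n) (c c' : X) :
    rearrE volume (deviation f Q c) (ENNReal.ofReal lam * volume Q.set) ≤
      2 * rearrE volume (deviation f Q c') (ENNReal.ofReal lam * volume Q.set)
        + rearrE volume (deviation f Q c) (ENNReal.ofReal κ * volume Q.set) := by
  set R := rearrE volume (deviation f Q c') (ENNReal.ofReal lam * volume Q.set)
  have hκlam : rearrE volume (deviation f Q c') (ENNReal.ofReal κ * volume Q.set) ≤ R :=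
    rearrE_antitone _ (by gcongr)
  calc rearrE volume (deviation f Q c) (ENNReal.ofReal lam * volume Q.set)
      ≤ R + ENNReal.ofReal ‖c - c'‖ :=
        rearrE_le_add_of_le_add (deviation_le_deviation_add f Q c c') _
    _ ≤ R + (rearrE volume (deviation f Q c) (ENNReal.ofReal κ * volume Q.set) + R) := by
        gcongr
        exact (ofReal_norm_sub_le_rearrE_add hκ f Q c c').trans (by gcongr)
    _ = _ := by ring

end Oscillation

theorem stmt12_general {n : ℕ} {X : Type*} [NormedAddCommGroup X]
    (f : (Fin n → ℝ) → X) (Q : DyCube n)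
    (lam κ : ℝ) (hlamκ : lam ≤ κ) (hκ : κ < 1 / 2) (c : X)
    (hc : rearrE volume (fun x => Q.set.indicator (fun y => ENNReal.ofReal ‖f y - c‖) x)
        (ENNReal.ofReal κ * volume Q.set) ≤ 2 * locMeanOsc f Q κ) :
    rearrE volume (fun x => Q.set.indicator (fun y => ENNReal.ofReal ‖f y - c‖) x)
        (ENNReal.ofReal lam * volume Q.set) ≤ 4 * locMeanOsc f Q lam := by
  change rearrE volume (deviation f Q c) _ ≤ _ at hc ⊢
  have hcκ : rearrE volume (deviation f Q c) (ENNReal.ofReal κ * volume Q.set)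
      ≤ 2 * locMeanOsc f Q lam :=
    hc.trans (by gcongr; exact locMeanOsc_le_of_le f Q hlamκ)
  calc rearrE volume (deviation f Q c) (ENNReal.ofReal lam * volume Q.set)
      ≤ ⨅ c', 2 * rearrE volume (deviation f Q c') (ENNReal.ofReal lam * volume Q.set)
          + 2 * locMeanOsc f Q lam :=
        le_iInf fun c' => (rearrE_deviation_le hlamκ hκ f Q c c').trans (by gcongr)
    _ = 2 * locMeanOsc f Q lam + 2 * locMeanOsc f Q lam := by
        rw [← ENNReal.iInf_add, ← ENNReal.mul_iInf_of_ne two_ne_zero ofNat_ne_top]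
        rfl
    _ = 4 * locMeanOsc f Q lam := by ring

/-- Quasi-optimal centers of oscillation: if `0 < λ ≤ κ < 1/2` and `c` is a quasi-optimal
center of oscillation at level `κ` (i.e. `(‖f − c‖χ_Q)^*(κ|Q|) ≤ 2 ω_κ(f;Q)`), then
`(‖f − c‖χ_Q)^*(λ|Q|) ≤ 4 ω_λ(f;Q)`. -/
theorem stmt12 {n : ℕ} {X : Type*} [NormedAddCommGroup X] [NormedSpace ℝ X] [CompleteSpace X]
    (f : (Fin n → ℝ) → X) (hf : AEStronglyMeasurable f volume) (Q : DyCube n)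
    (lam κ : ℝ) (hlam : 0 < lam) (hlamκ : lam ≤ κ) (hκ : κ < 1 / 2) (c : X)
    (hc : rearrE volume (fun x => Q.set.indicator (fun y => ENNReal.ofReal ‖f y - c‖) x)
        (ENNReal.ofReal κ * volume Q.set) ≤ 2 * locMeanOsc f Q κ) :
    rearrE volume (fun x => Q.set.indicator (fun y => ENNReal.ofReal ‖f y - c‖) x)
        (ENNReal.ofReal lam * volume Q.set) ≤ 4 * locMeanOsc f Q lam :=
  stmt12_general f Q lam κ hlamκ hκ c hc
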